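/- arXiv:2003.09471 — 4 statements merged into one kernel-verified Lean document; each statement's English description precedes it below -/
import Mathlib

section
/- For all real numbers λ₁ > 0, λ₂ > 0, t > 0 and every integer j ≥ 0, the limit as n → ∞ of the sum Σ_{m=0}^{⌊(n−j)/2⌋} [n! / (m! (m+j)! (n−2m−j)!)] · (λ₁t/n)^{m+j} · (λ₂t/n)^{m} · (1 − (λ₁+λ₂)t/n)^{n−2m−j} exists and equals e^{−(λ₁+λ₂)t} · Σ_{m=0}^{∞} (λ₁t)^{m+j} (λ₂t)^{m} / (m! (m+j)!). -/
/-!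
Put `x = (λ₁ + λ₂) t`, `K = 2m + j` and let `w m = (λ₁t)^(m+j) (λ₂t)^m / (m! (m+j)!)` be the
`m`-th term of the limiting series. For `K ≤ n` the `m`-th trinomial summand factors as
`(n.descFactorial K / n^K) · w m · (1 - x/n)^(n-K)`; the first factor tends to `1` and the last
to `e^{-x}`. Both factors are bounded uniformly in `n` (by `1` and by `e^{|x|}`), and `w` is
summable, so Tannery's theorem moves the limit inside the sum.
-/

open Filter Topology Nat

noncomputable def skellamWeight (a b : ℝ) (j m : ℕ) : ℝ :=
  a ^ (m + j) * b ^ m / (m ! * (m + j)!)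

lemma summable_skellamWeight (a b : ℝ) (j : ℕ) : Summable (skellamWeight a b j) := by
  refine .of_norm_bounded ((Real.summable_pow_div_factorial (|a| * |b|)).mul_left (|a| ^ j))
    fun m => ?_
  have hfac : (1 : ℝ) ≤ (m + j)! := mod_cast (m + j).factorial_pos
  calc ‖skellamWeight a b j m‖ = |a| ^ j * ((|a| * |b|) ^ m / m !) / (m + j)! := by
        simp only [skellamWeight, Real.norm_eq_abs, abs_div, abs_mul, abs_pow, Nat.abs_cast]
        ring
    _ ≤ |a| ^ j * ((|a| * |b|) ^ m / m !) := div_le_self (by positivity) hfac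

lemma tendsto_descFactorial_div_pow (k : ℕ) :
    Tendsto (fun n : ℕ => (n.descFactorial k : ℝ) / n ^ k) atTop (𝓝 1) := by
  have hz : ∀ᶠ n : ℕ in atTop, (n : ℝ) ^ k ≠ 0 := by
    filter_upwards [eventually_ne_atTop 0] with n hn
    positivity
  exact (Asymptotics.isEquivalent_iff_tendsto_one hz).mp (isEquivalent_descFactorial k)

lemma tendsto_one_sub_div_pow_sub (x : ℝ) (k : ℕ) :
    Tendsto (fun n : ℕ => (1 - x / n) ^ (n - k)) atTop (𝓝 (Real.exp (-x))) := by
  have hbase : Tendsto (fun n : ℕ => 1 - x / n) atTop (𝓝 1) := by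
    simpa using tendsto_const_nhds.sub (tendsto_const_div_atTop_nhds_zero_nat x)
  have hpow : Tendsto (fun n : ℕ => (1 - x / n) ^ n) atTop (𝓝 (Real.exp (-x))) := by
    simpa [sub_eq_add_neg, neg_div] using Real.tendsto_one_add_div_pow_exp (-x)
  have hquot := hpow.div (hbase.pow k) (by simp)
  rw [one_pow, div_one] at hquot
  refine hquot.congr' ?_
  filter_upwards [eventually_ge_atTop k, hbase.eventually_ne one_ne_zero] with n hk hne
  exact (pow_sub₀ _ hne hk).symm

lemma abs_one_sub_div_pow_le_exp_abs (x : ℝ) {k n : ℕ} (hk : k ≤ n) :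
    |1 - x / n| ^ k ≤ Real.exp |x| := by
  have hbase : |1 - x / n| ≤ Real.exp (|x| / n) := calc
    |1 - x / n| ≤ |x| / n + 1 := by
      simpa [abs_div, add_comm] using abs_sub (1 : ℝ) (x / n)
    _ ≤ Real.exp (|x| / n) := Real.add_one_le_exp _
  have hexp : (n : ℝ) * (|x| / n) ≤ |x| := by
    rcases eq_or_ne n 0 with rfl | hn
    · simp
    · rw [mul_div_cancel₀ _ (by exact_mod_cast hn)]
  calc |1 - x / n| ^ k ≤ Real.exp (|x| / n) ^ k := by gcongr
    _ ≤ Real.exp (|x| / n) ^ n := pow_le_pow_right₀ (Real.one_le_exp (by positivity)) hk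
    _ = Real.exp (n * (|x| / n)) := (Real.exp_nat_mul _ _).symm
    _ ≤ Real.exp |x| := Real.exp_le_exp.mpr hexp

lemma abs_descFactorial_div_pow_mul_le (x c : ℝ) (k n : ℕ) :
    |n.descFactorial k / n ^ k * c * (1 - x / n) ^ (n - k)| ≤ |c| * Real.exp |x| := by
  have hratio : 0 ≤ (n.descFactorial k : ℝ) / n ^ k := by positivity
  have hratio_le : (n.descFactorial k : ℝ) / n ^ k ≤ 1 :=
    div_le_one_of_le₀ (mod_cast n.descFactorial_le_pow k) (by positivity)
  rw [abs_mul, abs_mul, abs_pow, abs_of_nonneg hratio]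
  calc _ ≤ 1 * |c| * Real.exp |x| := by
        gcongr
        exact abs_one_sub_div_pow_le_exp_abs x (Nat.sub_le n k)
    _ = |c| * Real.exp |x| := by rw [one_mul]

lemma factorial_div_mul_div_pow_eq {n m j : ℕ} (h : 2 * m + j ≤ n) (a b : ℝ) :
    (n ! : ℝ) / (m ! * (m + j)! * (n - 2 * m - j)!) * (a / n) ^ (m + j) * (b / n) ^ m =
      n.descFactorial (2 * m + j) / n ^ (2 * m + j) * skellamWeight a b j m := by
  have hfac : (n ! : ℝ) = (n - 2 * m - j)! * n.descFactorial (2 * m + j) := by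
    rw [Nat.sub_sub]
    exact_mod_cast (Nat.factorial_mul_descFactorial h).symm
  have hpow : (n : ℝ) ^ (2 * m + j) = n ^ (m + j) * n ^ m := by
    rw [← pow_add]; ring_nf
  rw [hfac, hpow, skellamWeight, div_pow, div_pow]
  field_simp

lemma tendsto_sum_range_of_dominated {α G : Type*} [NormedAddCommGroup G] [CompleteSpace G]
    {𝓕 : Filter α} {f : α → ℕ → G} {g : ℕ → G} {bound : ℕ → ℝ} {N : α → ℕ}
    (hN : Tendsto N 𝓕 atTop) (h_sum : Summable bound)
    (hf : ∀ m, Tendsto (f · m) 𝓕 (𝓝 (g m)))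
    (h_bound : ∀ᶠ n in 𝓕, ∀ m < N n, ‖f n m‖ ≤ bound m) :
    Tendsto (fun n => ∑ m ∈ Finset.range (N n), f n m) 𝓕 (𝓝 (∑' m, g m)) := by
  rcases 𝓕.eq_or_neBot with rfl | _
  · exact tendsto_bot
  refine .congr (fun n => (sum_eq_tsum_indicator (f n) _).symm) ?_
  refine tendsto_tsum_of_dominated_convergence h_sum (fun m => ?_) ?_
  · refine (hf m).congr' ?_
    filter_upwards [hN.eventually_gt_atTop m] with n hm
    exact (Set.indicator_of_mem (by simpa using hm) _).symm
  filter_upwards [h_bound] with n hn m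
  by_cases hm : m < N n
  · rw [Set.indicator_of_mem (by simpa using hm)]
    exact hn m hm
  · obtain ⟨n', hn', hmn'⟩ := (h_bound.and (hN.eventually_gt_atTop m)).exists
    rw [Set.indicator_of_notMem (by simpa using hm), norm_zero]
    exact (norm_nonneg _).trans (hn' m hmn')

theorem skellam_trinomial_limit_general (lam1 lam2 t : ℝ) (j : ℕ) :
    Tendsto (fun n : ℕ =>
        ∑ m ∈ Finset.range ((n - j) / 2 + 1),
          ((Nat.factorial n : ℝ) /
              ((Nat.factorial m : ℝ) * (Nat.factorial (m + j) : ℝ) *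
                (Nat.factorial (n - 2 * m - j) : ℝ))) *
            (lam1 * t / n) ^ (m + j) * (lam2 * t / n) ^ m *
            (1 - (lam1 + lam2) * t / n) ^ (n - 2 * m - j))
      atTop
      (nhds (Real.exp (-(lam1 + lam2) * t) *
        ∑' m : ℕ, (lam1 * t) ^ (m + j) * (lam2 * t) ^ m /
          ((Nat.factorial m : ℝ) * (Nat.factorial (m + j) : ℝ)))) := by
  set w := skellamWeight (lam1 * t) (lam2 * t) j
  rw [neg_mul, ← tsum_mul_left]
  set x := (lam1 + lam2) * t
  have hsummand : ∀ n m, 2 * m + j ≤ n →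
      (n ! : ℝ) / (m ! * (m + j)! * (n - 2 * m - j)!) * (lam1 * t / n) ^ (m + j) *
          (lam2 * t / n) ^ m * (1 - x / n) ^ (n - 2 * m - j) =
        n.descFactorial (2 * m + j) / n ^ (2 * m + j) * w m * (1 - x / n) ^ (n - (2 * m + j)) :=
    fun n m h => by rw [factorial_div_mul_div_pow_eq h, Nat.sub_sub]
  refine tendsto_sum_range_of_dominated (bound := fun m => |w m| * Real.exp |x|)
    (tendsto_atTop_atTop.mpr fun b => ⟨2 * b + j, fun n hn => by omega⟩)
    ((summable_skellamWeight _ _ j).abs.mul_right _) (fun m => ?_) ?_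
  · have hlim := ((tendsto_descFactorial_div_pow (2 * m + j)).mul_const (w m)).mul
      (tendsto_one_sub_div_pow_sub x (2 * m + j))
    rw [one_mul, mul_comm (w m)] at hlim
    refine hlim.congr' ?_
    filter_upwards [eventually_ge_atTop (2 * m + j)] with n hn
    exact (hsummand n m hn).symm
  · filter_upwards [eventually_ge_atTop j] with n hjn m hm
    have hmn : 2 * m + j ≤ n := by omega
    rw [hsummand n m hmn, Real.norm_eq_abs]
    exact abs_descFactorial_div_pow_mul_le x (w m) _ n

/-- The trinomial approximation of the Skellam distribution converges to
the Skellam probability mass function. -/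
theorem skellam_trinomial_limit (lam1 lam2 t : ℝ) (hlam1 : 0 < lam1) (hlam2 : 0 < lam2)
    (ht : 0 < t) (j : ℕ) :
    Tendsto (fun n : ℕ =>
        ∑ m ∈ Finset.range ((n - j) / 2 + 1),
          ((Nat.factorial n : ℝ) /
              ((Nat.factorial m : ℝ) * (Nat.factorial (m + j) : ℝ) *
                (Nat.factorial (n - 2 * m - j) : ℝ))) *
            (lam1 * t / n) ^ (m + j) * (lam2 * t / n) ^ m *
            (1 - (lam1 + lam2) * t / n) ^ (n - 2 * m - j))
      atTop
      (nhds (Real.exp (-(lam1 + lam2) * t) *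
        ∑' m : ℕ, (lam1 * t) ^ (m + j) * (lam2 * t) ^ m /
          ((Nat.factorial m : ℝ) * (Nat.factorial (m + j) : ℝ)))) :=
  skellam_trinomial_limit_general lam1 lam2 t j
end

section
/- Let α ∈ (0,1), μ > 0, λ > 0 with 2λ < μ, and θ ∈ ℝ. Then the iterated series Σ_{n=1}^{∞} μ^{α−n} binom(α,n) λ^{n} Σ_{l=1}^{n} C(n,l) (−1)^{l+1} (e^{iθl} − 1) converges and equals −( (μ + λ(1 − e^{iθ}))^{α} − μ^{α} ), where the complex power is the principal branch and C(n,l) is the ordinary binomial coefficient. -/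
/-!
With `x = e^{iθ}` the inner sum is `-(1 - x)^n` by the binomial theorem, so the series is minus
the binomial series of `(μ + w)^α - μ^α = μ^α ((1 + w/μ)^α - 1)` at `w = λ(1 - x)`, which
converges because `‖w‖ ≤ 2λ < μ`.
-/

/-- Generalized binomial coefficient `binom(α, n) = (∏_{j=0}^{n-1} (α - j)) / n!`. -/
noncomputable def genBinom (α : ℝ) (n : ℕ) : ℝ :=
  (∏ j ∈ Finset.range n, (α - j)) / (Nat.factorial n : ℝ)

open Finset

theorem ofReal_genBinom (α : ℝ) (n : ℕ) : (genBinom α n : ℂ) = Ring.choose (α : ℂ) n := by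
  rw [← Complex.ofReal_choose, Ring.choose_eq_smul, ← Polynomial.aeval_eq_smeval,
    Polynomial.aeval_def, Polynomial.eval₂_eq_eval_map, descPochhammer_map,
    descPochhammer_eval_eq_prod_range, genBinom, smul_eq_mul, inv_mul_eq_div]

theorem Complex.hasSum_choose_mul_pow (a : ℂ) {z : ℂ} (hz : ‖z‖ < 1) :
    HasSum (fun n ↦ Ring.choose a n * z ^ n) ((1 + z) ^ a) := by
  have hz' : z ∈ Metric.eball 0 1 := by
    rw [Metric.mem_eball, edist_zero_right, ← ofReal_norm]
    exact ENNReal.ofReal_lt_one.mpr hz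
  simpa [FormalMultilinearSeries.ofScalars_apply_eq, binomialSeries, mul_comm] using
    one_add_cpow_hasFPowerSeriesOnBall_zero.hasSum hz'

theorem Complex.ofReal_mul_cpow {r : ℝ} (hr : 0 < r) {w : ℂ} (hw : w ≠ 0) (s : ℂ) :
    ((r : ℂ) * w) ^ s = (r : ℂ) ^ s * w ^ s := by
  have hr' : (r : ℂ) ≠ 0 := ofReal_ne_zero.mpr hr.ne'
  rw [cpow_def_of_ne_zero (mul_ne_zero hr' hw), cpow_def_of_ne_zero hr', cpow_def_of_ne_zero hw,
    log_ofReal_mul hr hw, ofReal_log hr.le, add_mul, exp_add]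

theorem sum_Icc_choose_mul_neg_one_pow_succ_mul_pow_sub_one {R : Type*} [CommRing R] (x : R)
    {m : ℕ} (hm : m ≠ 0) :
    ∑ l ∈ Icc 1 m, (m.choose l : R) * (-1) ^ (l + 1) * (x ^ l - 1) = -(1 - x) ^ m := by
  have h0 := add_pow (-1 : R) 1 m
  have h1 := add_pow (-x) 1 m
  rw [neg_add_cancel, zero_pow hm] at h0
  rw [neg_add_eq_sub] at h1
  have hrange : ∑ l ∈ range (m + 1), (m.choose l : R) * (-1) ^ (l + 1) * (x ^ l - 1)
      = 0 - (1 - x) ^ m := by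
    rw [h0, h1, ← sum_sub_distrib]
    refine sum_congr rfl fun l _ ↦ ?_
    rw [neg_pow, neg_pow x]
    ring
  rw [range_eq_Ico, sum_eq_sum_Ico_succ_bot (by omega), Ico_add_one_right_eq_Icc] at hrange
  simpa using hrange

theorem hasSum_rpow_mul_genBinom_mul_pow (α : ℝ) {μ : ℝ} (hμ : 0 < μ) {w : ℂ} (hw : ‖w‖ < μ) :
    HasSum (fun n : ℕ ↦ ((μ ^ (α - ((n : ℝ) + 1)) * genBinom α (n + 1) : ℝ) : ℂ) * w ^ (n + 1))
      ((μ + w) ^ (α : ℂ) - (μ : ℂ) ^ (α : ℂ)) := by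
  have hμ' : (μ : ℂ) ≠ 0 := Complex.ofReal_ne_zero.mpr hμ.ne'
  set z := w / μ with hz
  have hz1 : ‖z‖ < 1 := by
    rwa [hz, norm_div, Complex.norm_real, Real.norm_of_nonneg hμ.le, div_lt_one hμ]
  have h1z : 1 + z ≠ 0 := fun h ↦ by simp [eq_neg_of_add_eq_zero_right h] at hz1
  have hsum := (hasSum_nat_add_iff' 1).2 (Complex.hasSum_choose_mul_pow α hz1)
  simp only [range_one, sum_singleton, Ring.choose_zero_right, pow_zero, mul_one] at hsum
  have hterm (n : ℕ) : ((μ ^ (α - ((n : ℝ) + 1)) * genBinom α (n + 1) : ℝ) : ℂ) * w ^ (n + 1)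
      = (μ : ℂ) ^ (α : ℂ) * (Ring.choose (α : ℂ) (n + 1) * z ^ (n + 1)) := by
    rw [Complex.ofReal_mul, Complex.ofReal_cpow hμ.le, ofReal_genBinom, Complex.ofReal_sub,
      Complex.cpow_sub _ _ hμ']
    push_cast
    rw [← Nat.cast_succ, Complex.cpow_natCast, hz, div_pow]
    field_simp
  have hvalue : (μ + w) ^ (α : ℂ) - (μ : ℂ) ^ (α : ℂ)
      = (μ : ℂ) ^ (α : ℂ) * ((1 + z) ^ (α : ℂ) - 1) := by
    rw [show (μ : ℂ) + w = μ * (1 + z) by rw [hz, mul_add, mul_one, mul_div_cancel₀ _ hμ'],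
      Complex.ofReal_mul_cpow hμ h1z]
    ring
  rw [funext hterm, hvalue]
  exact hsum.mul_left _

theorem tsfpp_levy_exponent_general (α μ lam θ : ℝ)
    (hlam : 0 < lam) (hlamμ : 2 * lam < μ) :
    HasSum (fun n : ℕ =>
        ((μ ^ (α - ((n : ℝ) + 1)) * genBinom α (n + 1) * lam ^ (n + 1) : ℝ) : ℂ) *
          ∑ l ∈ Finset.Icc 1 (n + 1),
            ((n + 1).choose l : ℂ) * (-1 : ℂ) ^ (l + 1) *
              (Complex.exp (Complex.I * θ * (l : ℂ)) - 1))
      (-((((μ : ℂ) + (lam : ℂ) * (1 - Complex.exp (Complex.I * θ))) ^ (α : ℂ)) -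
          (μ : ℂ) ^ (α : ℂ))) := by
  set x := Complex.exp (Complex.I * θ)
  have hx : ‖x‖ = 1 := Complex.norm_exp_I_mul_ofReal θ
  have hw : ‖(lam : ℂ) * (1 - x)‖ < μ := calc
    ‖(lam : ℂ) * (1 - x)‖ ≤ lam * 2 := by
      rw [norm_mul, Complex.norm_real, Real.norm_of_nonneg hlam.le]
      gcongr
      exact (norm_sub_le _ _).trans (by simp [hx]; norm_num)
    _ < μ := by linarith
  have hterm (n : ℕ) :
      ((μ ^ (α - ((n : ℝ) + 1)) * genBinom α (n + 1) * lam ^ (n + 1) : ℝ) : ℂ) *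
          ∑ l ∈ Icc 1 (n + 1), ((n + 1).choose l : ℂ) * (-1 : ℂ) ^ (l + 1) *
            (Complex.exp (Complex.I * θ * (l : ℂ)) - 1)
        = -(((μ ^ (α - ((n : ℝ) + 1)) * genBinom α (n + 1) : ℝ) : ℂ) *
            (lam * (1 - x)) ^ (n + 1)) := by
    have hpow (l : ℕ) : Complex.exp (Complex.I * θ * l) = x ^ l := by
      rw [← Complex.exp_nat_mul]; ring_nf
    simp only [hpow, sum_Icc_choose_mul_neg_one_pow_succ_mul_pow_sub_one x n.add_one_ne_zero,
      mul_pow]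
    push_cast
    ring
  rw [funext hterm]
  exact (hasSum_rpow_mul_genBinom_mul_pow α (by linarith) hw).neg

/-- the Lévy-exponent identity for the tempered space-fractional Poisson
process: `Σ_{n≥1} μ^{α-n} binom(α,n) λ^n Σ_{l=1}^n C(n,l) (-1)^{l+1} (e^{iθl} - 1)
 = -((μ + λ(1 - e^{iθ}))^α - μ^α)`. -/
theorem tsfpp_levy_exponent (α μ lam θ : ℝ) (hα : α ∈ Set.Ioo (0 : ℝ) 1) (hμ : 0 < μ)
    (hlam : 0 < lam) (hlamμ : 2 * lam < μ) :
    HasSum (fun n : ℕ =>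
        ((μ ^ (α - ((n : ℝ) + 1)) * genBinom α (n + 1) * lam ^ (n + 1) : ℝ) : ℂ) *
          ∑ l ∈ Finset.Icc 1 (n + 1),
            ((n + 1).choose l : ℂ) * (-1 : ℂ) ^ (l + 1) *
              (Complex.exp (Complex.I * θ * (l : ℂ)) - 1))
      (-((((μ : ℂ) + (lam : ℂ) * (1 - Complex.exp (Complex.I * θ))) ^ (α : ℂ)) -
          (μ : ℂ) ^ (α : ℂ))) :=
  tsfpp_levy_exponent_general α μ lam θ hlam hlamμ
end

section
/- Fix an integer k ≥ 1 and reals λ > 0, t > 0. For every real s, the series Σ_{n=0}^{∞} s^{n} · p_n^{λ}(t) converges absolutely and equals exp(−λt( k − Σ_{j=1}^{k} s^{j} )). -/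
/-- Probability mass function of the Poisson process of order `k` with rate `lam` at
time `t`: `p_n(t) = Σ_{(x₁,…,x_k) ∈ Ω(k,n)} e^{-kλt} (λt)^{x₁+⋯+x_k} / (x₁!⋯x_k!)`,
where `Ω(k,n)` is the set of `k`-tuples of nonnegative integers with
`x₁ + 2x₂ + ⋯ + k x_k = n`. -/
noncomputable def ppokPMF (k : ℕ) (lam t : ℝ) (n : ℕ) : ℝ :=
  ∑ x ∈ (Fintype.piFinset fun _ : Fin k => Finset.range (n + 1)).filter
      (fun x => ∑ i : Fin k, ((i : ℕ) + 1) * x i = n),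
    Real.exp (-(k * lam * t)) * (lam * t) ^ (∑ i : Fin k, x i) /
      ∏ i : Fin k, ((x i).factorial : ℝ)

/-!
Expanding `e^{-kλt} ∏_{j=1}^k e^{λt s^j}` as a product of `k` exponential series gives an
absolutely summable family indexed by `x ∈ ℕ^k`, whose term at `x` is `s^n` times the summand of
`p_n(t)` at `x`, where `n = x₁ + 2x₂ + ⋯ + k x_k`. Regrouping this family along the finite fibres
`Ω(k,n)` of the weight `n` gives the series `Σ s^n p_n(t)`; absolute convergence survives the
regrouping because each group is a finite sum.
-/

open Finset
open scoped Nat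

section PiProduct

variable {R β : Type*} [NormedCommRing R]

theorem summable_norm_prod_pi {k : ℕ} {g : Fin k → β → R}
    (hg : ∀ i, Summable fun m => ‖g i m‖) :
    Summable fun x : Fin k → β => ‖∏ i, g i (x i)‖ := by
  induction k with
  | zero => exact Summable.of_finite
  | succ k ih =>
    rw [← (Fin.consEquiv fun _ => β).summable_iff]
    simpa [Function.comp_def, Fin.consEquiv, Fin.prod_univ_succ] using
      (hg 0).mul_norm (ih fun i => hg i.succ)

theorem hasSum_prod_pi [CompleteSpace R] {k : ℕ} {g : Fin k → β → R}
    (hg : ∀ i, Summable fun m => ‖g i m‖) :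
    HasSum (fun x : Fin k → β => ∏ i, g i (x i)) (∏ i, ∑' m, g i m) := by
  induction k with
  | zero => simp
  | succ k ih =>
    rw [← (Fin.consEquiv fun _ => β).hasSum_iff, Fin.prod_univ_succ]
    set tail : (Fin k → β) → R := fun y => ∏ i : Fin k, g i.succ (y i)
    have htail : HasSum tail (∏ i : Fin k, ∑' m, g i.succ m) := ih fun i => hg i.succ
    have hnorm : Summable fun y => ‖tail y‖ := summable_norm_prod_pi fun i => hg i.succ
    have hprod := (hg 0).of_norm.hasSum.mul htail <|
      summable_mul_of_summable_norm (f := g 0) (g := tail) (hg 0) hnorm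
    simpa [Function.comp_def, Fin.consEquiv, Fin.prod_univ_succ] using hprod

end PiProduct

section Fibers

variable {α β E : Type*} [NormedAddCommGroup E]

theorem HasSum.sum_finset_fibers [CompleteSpace E] {f : α → E} {a : E} (hf : HasSum f a)
    {w : α → β} {T : β → Finset α} (hT : ∀ b, (T b : Set α) = w ⁻¹' {b}) :
    HasSum (fun b => ∑ x ∈ T b, f x) a := by
  convert hf.tsum_fiberwise w using 2 with b
  rw [← hT, tsum_subtype']

theorem Summable.norm_sum_finset_fibers {f : α → E} (hf : Summable fun x => ‖f x‖) {w : α → β}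
    {T : β → Finset α} (hT : ∀ b, (T b : Set α) = w ⁻¹' {b}) :
    Summable fun b => ‖∑ x ∈ T b, f x‖ :=
  (hf.hasSum.sum_finset_fibers hT).summable.of_nonneg_of_le (fun _ => norm_nonneg _)
    fun _ => norm_sum_le _ _

end Fibers

theorem summable_norm_prod_pow_div_factorial {k : ℕ} (a : Fin k → ℝ) :
    Summable fun x : Fin k → ℕ => ‖∏ i, a i ^ x i / (x i)!‖ :=
  summable_norm_prod_pi (g := fun i m => a i ^ m / m !) fun i =>
    NormedSpace.norm_expSeries_div_summable (a i)

theorem hasSum_prod_pow_div_factorial {k : ℕ} (a : Fin k → ℝ) :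
    HasSum (fun x : Fin k → ℕ => ∏ i, a i ^ x i / (x i)!) (Real.exp (∑ i, a i)) := by
  have hexp (i : Fin k) : ∑' m, a i ^ m / m ! = Real.exp (a i) := by
    rw [Real.exp_eq_exp_ℝ, (NormedSpace.expSeries_div_hasSum_exp (a i)).tsum_eq]
  rw [Real.exp_sum, ← prod_congr rfl fun i _ => hexp i]
  exact hasSum_prod_pi (g := fun i m => a i ^ m / m !) fun i =>
    NormedSpace.norm_expSeries_div_summable (a i)

-- The index `i : Fin k` stands for the part size `i + 1`; `ppokFiber k n` is `Ω(k,n)`.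
def ppokWeight (k : ℕ) (x : Fin k → ℕ) : ℕ := ∑ i : Fin k, ((i : ℕ) + 1) * x i

def ppokFiber (k n : ℕ) : Finset (Fin k → ℕ) :=
  (Fintype.piFinset fun _ : Fin k => Finset.range (n + 1)).filter (ppokWeight k · = n)

theorem le_ppokWeight {k : ℕ} (x : Fin k → ℕ) (i : Fin k) : x i ≤ ppokWeight k x :=
  (Nat.le_mul_of_pos_left _ i.succ_pos).trans <|
    single_le_sum (f := fun j : Fin k => ((j : ℕ) + 1) * x j) (fun _ _ => Nat.zero_le _)
      (mem_univ i)

theorem coe_ppokFiber (k n : ℕ) : (ppokFiber k n : Set (Fin k → ℕ)) = ppokWeight k ⁻¹' {n} := by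
  ext x
  simp only [ppokFiber, coe_filter, Fintype.mem_piFinset, mem_range, Nat.lt_succ_iff,
    Set.mem_ofPred_eq, Set.mem_preimage, Set.mem_singleton_iff, and_iff_right_iff_imp]
  rintro rfl i
  exact le_ppokWeight x i

theorem pow_mul_ppokPMF (k : ℕ) (lam t s : ℝ) (n : ℕ) :
    s ^ n * ppokPMF k lam t n = ∑ x ∈ ppokFiber k n,
      Real.exp (-(k * lam * t)) * ∏ i : Fin k, (lam * t * s ^ ((i : ℕ) + 1)) ^ x i / (x i)! := by
  rw [ppokPMF, mul_sum]
  refine sum_congr rfl fun x hx => ?_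
  have hw : ppokWeight k x = n := (mem_filter.mp hx).2
  rw [← hw, ppokWeight, prod_div_distrib]
  simp only [mul_pow, ← pow_mul, prod_mul_distrib, prod_pow_eq_pow_sum]
  ring

theorem Fin.sum_univ_succ_eq_sum_Icc {M : Type*} [AddCommMonoid M] (k : ℕ) (f : ℕ → M) :
    ∑ i : Fin k, f ((i : ℕ) + 1) = ∑ j ∈ Icc 1 k, f j := by
  rw [Fin.sum_univ_eq_sum_range (fun i => f (i + 1)), ← Ico_add_one_right_eq_Icc,
    sum_Ico_eq_sum_range]
  simp only [add_comm, Nat.add_sub_cancel]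

theorem ppok_pgf_general (k : ℕ) (lam t : ℝ) (s : ℝ) :
    Summable (fun n : ℕ => |s ^ n * ppokPMF k lam t n|) ∧
    HasSum (fun n : ℕ => s ^ n * ppokPMF k lam t n)
      (Real.exp (-(lam * t * (k - ∑ j ∈ Finset.Icc 1 k, s ^ j)))) := by
  set a : Fin k → ℝ := fun i => lam * t * s ^ ((i : ℕ) + 1)
  set c := Real.exp (-(k * lam * t))
  set f : (Fin k → ℕ) → ℝ := fun x => c * ∏ i, a i ^ x i / (x i)!
  have hf : Summable fun x => ‖f x‖ := by
    simpa only [f, norm_mul] using (summable_norm_prod_pow_div_factorial a).mul_left ‖c‖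
  have hexp : c * Real.exp (∑ i, a i) =
      Real.exp (-(lam * t * (k - ∑ j ∈ Finset.Icc 1 k, s ^ j))) := by
    rw [← Real.exp_add, ← mul_sum, Fin.sum_univ_succ_eq_sum_Icc k (s ^ ·)]
    ring_nf
  have hsum : HasSum f (Real.exp (-(lam * t * (k - ∑ j ∈ Finset.Icc 1 k, s ^ j)))) :=
    hexp ▸ (hasSum_prod_pow_div_factorial a).mul_left c
  simp only [pow_mul_ppokPMF, ← Real.norm_eq_abs]
  exact ⟨hf.norm_sum_finset_fibers (coe_ppokFiber k), hsum.sum_finset_fibers (coe_ppokFiber k)⟩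

/-- the probability generating function of the Poisson process of order
`k`: for every real `s`, `Σ_{n≥0} s^n p_n(t)` converges absolutely and equals
`exp(-λt(k - Σ_{j=1}^k s^j))`. -/
theorem ppok_pgf (k : ℕ) (hk : 1 ≤ k) (lam t : ℝ) (hlam : 0 < lam) (ht : 0 < t)
    (s : ℝ) :
    Summable (fun n : ℕ => |s ^ n * ppokPMF k lam t n|) ∧
    HasSum (fun n : ℕ => s ^ n * ppokPMF k lam t n)
      (Real.exp (-(lam * t * (k - ∑ j ∈ Finset.Icc 1 k, s ^ j)))) :=
  ppok_pgf_general k lam t s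
end

section
/- Let α₁, α₂ ∈ (0,1), μ₁, μ₂ > 0 and λ₁, λ₂ > 0 with 2λ₁ < μ₁ and 2λ₂ < μ₂, and let θ ∈ ℝ. Then the iterated series converge and Σ_{n=1}^{∞} μ₁^{α₁−n} binom(α₁,n) λ₁^{n} Σ_{l=1}^{n} C(n,l)(−1)^{l+1}(e^{iθl} − 1) + Σ_{n=1}^{∞} μ₂^{α₂−n} binom(α₂,n) λ₂^{n} Σ_{l=1}^{n} C(n,l)(−1)^{l+1}(e^{−iθl} − 1) = −( (μ₁ + λ₁(1−e^{iθ}))^{α₁} − μ₁^{α₁} ) − ( (μ₂ + λ₂(1−e^{−iθ}))^{α₂} − μ₂^{α₂} ), where complex powers are principal branches and C(n,l) is the ordinary binomial coefficient. -/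
/-!
By the binomial theorem the inner sum equals `-(1 - x) ^ n` with `x = e^{±iθ}`, so each
outer series is `-∑_{n ≥ 1} μ^{α-n} binom(α,n) (λ(1 - x))^n`. As `‖λ(1 - x)‖ ≤ 2λ < μ`,
this is minus the tail of the binomial series of `(μ + λ(1 - x))^α = μ^α (1 + λ(1 - x)/μ)^α`,
which converges on the unit disc to the principal power.
-/

open Finset

lemma genBinom_eq_choose (α : ℝ) (n : ℕ) : genBinom α n = Ring.choose α n := by
  rw [genBinom, Ring.choose_eq_smul, ← Polynomial.aeval_eq_smeval, Polynomial.aeval_def,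
    ← Polynomial.eval_map, descPochhammer_map, descPochhammer_eval_eq_prod_range, smul_eq_mul,
    inv_mul_eq_div]

lemma sum_Icc_choose_mul_neg_one_pow_mul_pow_sub_one {R : Type*} [CommRing R] (m : ℕ) (x : R) :
    ∑ l ∈ Icc 1 (m + 1), ((m + 1).choose l : R) * (-1) ^ (l + 1) * (x ^ l - 1) =
      -(1 - x) ^ (m + 1) := by
  rw [sum_subset (s₂ := range (m + 2)) (fun l hl ↦ by simp at hl ⊢; omega)
    (fun l hl₂ hl ↦ by
      simp only [mem_range, mem_Icc, not_and, not_le] at hl₂ hl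
      obtain rfl : l = 0 := by omega
      simp)]
  -- the shape of the `add_pow` expansions of `(-1 + 1) ^ (m + 1)` and `(-x + 1) ^ (m + 1)`
  have hterm (l : ℕ) : ((m + 1).choose l : R) * (-1) ^ (l + 1) * (x ^ l - 1) =
      (-1) ^ l * 1 ^ (m + 1 - l) * (m + 1).choose l -
        (-x) ^ l * 1 ^ (m + 1 - l) * (m + 1).choose l := by
    rw [neg_pow x, one_pow, pow_succ]
    ring
  simp_rw [hterm]
  rw [sum_sub_distrib, ← add_pow, ← add_pow, neg_add_cancel, zero_pow m.succ_ne_zero,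
    neg_add_eq_sub, zero_sub]

namespace Complex

lemma hasSum_choose_mul_pow_s19 {a z : ℂ} (hz : ‖z‖ < 1) :
    HasSum (fun n ↦ Ring.choose a n * z ^ n) ((1 + z) ^ a) := by
  have := (one_add_cpow_hasFPowerSeriesOnBall_zero (a := a)).hasSum (y := z) (by
    rw [← ENNReal.ofReal_one, Metric.eball_ofReal]; simpa using hz)
  simpa [binomialSeries, FormalMultilinearSeries.ofScalars_apply_eq, mul_comm] using this

lemma ofReal_mul_cpow_s19 {μ : ℝ} (hμ : 0 < μ) (w s : ℂ) :
    ((μ : ℂ) * w) ^ s = (μ : ℂ) ^ s * w ^ s := by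
  rcases eq_or_ne w 0 with rfl | hw
  · rcases eq_or_ne s 0 with rfl | hs <;> simp [*]
  have hμ' : (μ : ℂ) ≠ 0 := ofReal_ne_zero.2 hμ.ne'
  rw [cpow_def_of_ne_zero (mul_ne_zero hμ' hw), cpow_def_of_ne_zero hμ', cpow_def_of_ne_zero hw,
    log_ofReal_mul hμ hw, ← ofReal_log hμ.le, add_mul, exp_add]

lemma hasSum_cpow_sub_mul_choose_mul_pow {μ : ℝ} {a z : ℂ} (hz : ‖z‖ < μ) :
    HasSum (fun n : ℕ ↦ (μ : ℂ) ^ (a - n) * Ring.choose a n * z ^ n) ((μ + z) ^ a) := by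
  have hμ : 0 < μ := (norm_nonneg z).trans_lt hz
  have hμ' : (μ : ℂ) ≠ 0 := ofReal_ne_zero.2 hμ.ne'
  have hzμ : ‖z / μ‖ < 1 := by
    rwa [norm_div, norm_real, Real.norm_of_nonneg hμ.le, div_lt_one hμ]
  have hterm (n : ℕ) : (μ : ℂ) ^ (a - n) * Ring.choose a n * z ^ n =
      (μ : ℂ) ^ a * (Ring.choose a n * (z / μ) ^ n) := by
    rw [cpow_sub _ _ hμ', cpow_natCast, div_pow]
    field_simp
  have key := (hasSum_choose_mul_pow_s19 (a := a) hzμ).mul_left ((μ : ℂ) ^ a)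
  rwa [← ofReal_mul_cpow_s19 hμ, mul_add, mul_one, mul_div_cancel₀ _ hμ', ← funext hterm] at key

lemma hasSum_cpow_sub_succ_mul_choose_succ_mul_pow_succ {μ : ℝ} {a z : ℂ} (hz : ‖z‖ < μ) :
    HasSum (fun n : ℕ ↦ (μ : ℂ) ^ (a - (n + 1)) * Ring.choose a (n + 1) * z ^ (n + 1))
      ((μ + z) ^ a - (μ : ℂ) ^ a) := by
  simpa using (hasSum_nat_add_iff' 1).2 (hasSum_cpow_sub_mul_choose_mul_pow hz)

end Complex

open Complex in
lemma hasSum_tempered_binomial {α μ lam : ℝ} (hlam : 0 < lam) (h : 2 * lam < μ) {x : ℂ}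
    (hx : ‖x‖ ≤ 1) :
    HasSum (fun n : ℕ ↦
        ((μ ^ (α - ((n : ℝ) + 1)) * genBinom α (n + 1) * lam ^ (n + 1) : ℝ) : ℂ) *
          ∑ l ∈ Icc 1 (n + 1), ((n + 1).choose l : ℂ) * (-1) ^ (l + 1) * (x ^ l - 1))
      (-(((μ : ℂ) + lam * (1 - x)) ^ (α : ℂ) - (μ : ℂ) ^ (α : ℂ))) := by
  have hz : ‖(lam : ℂ) * (1 - x)‖ < μ := calc
    ‖(lam : ℂ) * (1 - x)‖ ≤ lam * 2 := by
      rw [norm_mul, norm_real, Real.norm_of_nonneg hlam.le]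
      gcongr
      exact (norm_sub_le _ _).trans (by simp; linarith)
    _ < μ := by linarith
  have hterm (n : ℕ) :
      ((μ ^ (α - ((n : ℝ) + 1)) * genBinom α (n + 1) * lam ^ (n + 1) : ℝ) : ℂ) *
          ∑ l ∈ Icc 1 (n + 1), ((n + 1).choose l : ℂ) * (-1) ^ (l + 1) * (x ^ l - 1) =
        -((μ : ℂ) ^ ((α : ℂ) - (n + 1)) * Ring.choose (α : ℂ) (n + 1) *
          (lam * (1 - x)) ^ (n + 1)) := by
    rw [sum_Icc_choose_mul_neg_one_pow_mul_pow_sub_one, genBinom_eq_choose, ofReal_mul,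
      ofReal_mul, ofReal_cpow (by linarith), ofReal_choose, mul_pow]
    push_cast
    ring
  simpa only [hterm] using (hasSum_cpow_sub_succ_mul_choose_succ_mul_pow_succ hz).neg

theorem tsfsp_levy_exponent_general (α₁ α₂ μ₁ μ₂ lam1 lam2 θ : ℝ)
    (hlam1 : 0 < lam1) (hlam2 : 0 < lam2)
    (h1 : 2 * lam1 < μ₁) (h2 : 2 * lam2 < μ₂) :
    ∃ S₁ S₂ : ℂ,
      HasSum (fun n : ℕ =>
          ((μ₁ ^ (α₁ - ((n : ℝ) + 1)) * genBinom α₁ (n + 1) * lam1 ^ (n + 1) : ℝ) : ℂ) *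
            ∑ l ∈ Finset.Icc 1 (n + 1),
              ((n + 1).choose l : ℂ) * (-1 : ℂ) ^ (l + 1) *
                (Complex.exp (Complex.I * θ * (l : ℂ)) - 1)) S₁ ∧
      HasSum (fun n : ℕ =>
          ((μ₂ ^ (α₂ - ((n : ℝ) + 1)) * genBinom α₂ (n + 1) * lam2 ^ (n + 1) : ℝ) : ℂ) *
            ∑ l ∈ Finset.Icc 1 (n + 1),
              ((n + 1).choose l : ℂ) * (-1 : ℂ) ^ (l + 1) *
                (Complex.exp (-(Complex.I * θ * (l : ℂ))) - 1)) S₂ ∧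
      S₁ + S₂ =
        -((((μ₁ : ℂ) + (lam1 : ℂ) * (1 - Complex.exp (Complex.I * θ))) ^ (α₁ : ℂ)) -
            (μ₁ : ℂ) ^ (α₁ : ℂ))
          - ((((μ₂ : ℂ) + (lam2 : ℂ) * (1 - Complex.exp (-(Complex.I * θ)))) ^ (α₂ : ℂ)) -
            (μ₂ : ℂ) ^ (α₂ : ℂ)) := by
  have hexp_pow (w : ℂ) (l : ℕ) : Complex.exp w ^ l = Complex.exp (w * l) := by
    rw [mul_comm, Complex.exp_nat_mul]
  have hb₁ := hasSum_tempered_binomial (α := α₁) hlam1 h1 (x := Complex.exp (Complex.I * θ))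
    (by simp [Complex.norm_exp])
  have hb₂ := hasSum_tempered_binomial (α := α₂) hlam2 h2 (x := Complex.exp (-(Complex.I * θ)))
    (by simp [Complex.norm_exp])
  simp only [hexp_pow, neg_mul] at hb₁ hb₂
  exact ⟨_, _, hb₁, hb₂, by ring⟩

/-- the Lévy-exponent identity for the tempered space-fractional Skellam
process:
`Σ_{n≥1} μ₁^{α₁-n} binom(α₁,n) λ₁^n Σ_{l=1}^n C(n,l)(-1)^{l+1}(e^{iθl}-1)
 + Σ_{n≥1} μ₂^{α₂-n} binom(α₂,n) λ₂^n Σ_{l=1}^n C(n,l)(-1)^{l+1}(e^{-iθl}-1)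
 = -((μ₁+λ₁(1-e^{iθ}))^{α₁} - μ₁^{α₁}) - ((μ₂+λ₂(1-e^{-iθ}))^{α₂} - μ₂^{α₂})`. -/
theorem tsfsp_levy_exponent (α₁ α₂ μ₁ μ₂ lam1 lam2 θ : ℝ)
    (hα₁ : α₁ ∈ Set.Ioo (0 : ℝ) 1) (hα₂ : α₂ ∈ Set.Ioo (0 : ℝ) 1)
    (hμ₁ : 0 < μ₁) (hμ₂ : 0 < μ₂) (hlam1 : 0 < lam1) (hlam2 : 0 < lam2)
    (h1 : 2 * lam1 < μ₁) (h2 : 2 * lam2 < μ₂) :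
    ∃ S₁ S₂ : ℂ,
      HasSum (fun n : ℕ =>
          ((μ₁ ^ (α₁ - ((n : ℝ) + 1)) * genBinom α₁ (n + 1) * lam1 ^ (n + 1) : ℝ) : ℂ) *
            ∑ l ∈ Finset.Icc 1 (n + 1),
              ((n + 1).choose l : ℂ) * (-1 : ℂ) ^ (l + 1) *
                (Complex.exp (Complex.I * θ * (l : ℂ)) - 1)) S₁ ∧
      HasSum (fun n : ℕ =>
          ((μ₂ ^ (α₂ - ((n : ℝ) + 1)) * genBinom α₂ (n + 1) * lam2 ^ (n + 1) : ℝ) : ℂ) *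
            ∑ l ∈ Finset.Icc 1 (n + 1),
              ((n + 1).choose l : ℂ) * (-1 : ℂ) ^ (l + 1) *
                (Complex.exp (-(Complex.I * θ * (l : ℂ))) - 1)) S₂ ∧
      S₁ + S₂ =
        -((((μ₁ : ℂ) + (lam1 : ℂ) * (1 - Complex.exp (Complex.I * θ))) ^ (α₁ : ℂ)) -
            (μ₁ : ℂ) ^ (α₁ : ℂ))
          - ((((μ₂ : ℂ) + (lam2 : ℂ) * (1 - Complex.exp (-(Complex.I * θ)))) ^ (α₂ : ℂ)) -
            (μ₂ : ℂ) ^ (α₂ : ℂ)) :=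
  tsfsp_levy_exponent_general α₁ α₂ μ₁ μ₂ lam1 lam2 θ hlam1 hlam2 h1 h2
end
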